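/- Let π and ρ be nondecreasing parking functions of length n, and let c, c' be parking functions of length n with c↑ = c'↑. Then #{ (a,b) ∈ PF_n × PF_n : a↑ = π, b↑ = ρ, a*b = c } = #{ (a,b) ∈ PF_n × PF_n : a↑ = π, b↑ = ρ, a*b = c' }. (Equivalently, the homogeneous components CQSym_n of the Catalan algebra, spanned by the class sums P^π = Σ_{a↑=π} F_a, are stable under the internal product *.) -/

import Mathlib

open List

/-- `sortW w` is the nondecreasing rearrangement `w↑` of the word `w`. -/
def sortW (w : List ℕ) : List ℕ := w.mergeSort (fun a b => decide (a ≤ b))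

/-- `a` is a parking function: a word over the positive integers whose
nondecreasing rearrangement `a↑ = a'₁ ⋯ a'ₙ` satisfies `a'ᵢ ≤ i` for all `i`. -/
def IsPF (a : List ℕ) : Prop :=
  (∀ x ∈ a, 1 ≤ x) ∧ ∀ i, i < a.length → (sortW a).getD i 0 ≤ i + 1

/-- `dW w = min { i ≥ 1 : #{j : wⱼ ≤ i} < i }`. -/
noncomputable def dW (w : List ℕ) : ℕ := sInf {i | 1 ≤ i ∧ w.countP (fun x => decide (x ≤ i)) < i}

/-- Decrement by one every letter strictly greater than `d`. -/
def decAbove (d : ℕ) (w : List ℕ) : List ℕ := w.map (fun x => if d < x then x - 1 else x)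

lemma mem_dW_set (w : List ℕ) :
    (w.length + 1) ∈ {i | 1 ≤ i ∧ w.countP (fun x => decide (x ≤ i)) < i} := by
  refine ⟨by omega, ?_⟩
  have : w.countP (fun x => decide (x ≤ w.length + 1)) ≤ w.length := List.countP_le_length
  omega

lemma decAbove_sum_lt {w : List ℕ} (h : dW w ≠ w.length + 1) :
    (decAbove (dW w) w).sum < w.sum := by
  have hmem : 1 ≤ dW w ∧ w.countP (fun x => decide (x ≤ dW w)) < dW w := Nat.sInf_mem (⟨_, mem_dW_set w⟩ : Set.Nonempty _)
  have hle : dW w ≤ w.length + 1 := Nat.sInf_le (mem_dW_set w)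
  obtain ⟨h1, h2⟩ := hmem
  have hlen : dW w ≤ w.length := by omega
  -- there is a letter strictly greater than `dW w`
  have hx : ∃ x ∈ w, ¬ (x ≤ dW w) := by
    by_contra hc
    push_neg at hc
    have : w.countP (fun x => decide (x ≤ dW w)) = w.length := by
      rw [List.countP_eq_length]
      intro a ha
      simpa using hc a ha
    omega
  obtain ⟨x, hxw, hxd⟩ := hx
  have := List.sum_lt_sum (l := w) (f := fun y => if dW w < y then y - 1 else y) (g := id)
    (fun i _ => by dsimp; split <;> omega)
    ⟨x, hxw, by dsimp; rw [if_pos (by omega)]; omega⟩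
  simpa [decAbove] using this

/-- The parkization `Park(w)` of a word `w` over the positive integers. -/
noncomputable def park (w : List ℕ) : List ℕ :=
  if h : dW w = w.length + 1 then w
  else
    have : (decAbove (dW w) w).sum < w.sum := decAbove_sum_lt h
    park (decAbove (dW w) w)
termination_by w.sum

/-- The standardization `Std(w)`: its `i`-th letter is `#{j : wⱼ ≤ wᵢ}`. -/
def stdW (w : List ℕ) : List ℕ := w.map (fun x => w.countP (fun y => decide (y ≤ x)))

/-- `v[k]`: shift every letter of `v` by `k`. -/
def shiftW (k : ℕ) (v : List ℕ) : List ℕ := v.map (· + k)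

/-- Shifted concatenation `u • v = u · v[k]`, `k = |u|`. -/
def sconc (u v : List ℕ) : List ℕ := u ++ shiftW u.length v

/-- The multiset of all shuffles of two words, counted with multiplicity. -/
def shuffles : List ℕ → List ℕ → Multiset (List ℕ)
  | [], v => {v}
  | x :: u, [] => {x :: u}
  | x :: u, y :: v =>
      (shuffles u (y :: v)).map (fun w => x :: w) + (shuffles (x :: u) v).map (fun w => y :: w)
termination_by u v => u.length + v.length

/-- Shifted shuffle `u ⋒ v`, a multiset of words. -/
def sshuffle (u v : List ℕ) : Multiset (List ℕ) := shuffles u (shiftW u.length v)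

/-- Iterated shifted shuffle `u₁ ⋒ u₂ ⋒ ⋯ ⋒ u_r`. -/
def itersShuffle : List (List ℕ) → Multiset (List ℕ)
  | [] => {[]}
  | u :: rest => (itersShuffle rest).bind (fun v => sshuffle u v)

/-- Lexicographic pair-encoding `a ⊛ b` of two words of length `n` with letters in `[n]`:
the `i`-th letter is `(aᵢ - 1)·n + bᵢ`. -/
def pairEnc (n : ℕ) (a b : List ℕ) : List ℕ := List.zipWith (fun x y => (x - 1) * n + y) a b

/-- The internal product `a * b := Park(a ⊛ b)` of two parking functions of the same length. -/
noncomputable def iprod (a b : List ℕ) : List ℕ := park (pairEnc a.length a b)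

/-- The word `1^m` of length `m` with all letters equal to `1`. -/
def onesW (m : ℕ) : List ℕ := List.replicate m 1

/-- The multiset (without repetition) of all words `a` with `a↑ = π`. -/
def classM (π : List ℕ) : Multiset (List ℕ) :=
  (↑(π.permutations.dedup) : Multiset (List ℕ)).filter (fun a => sortW a = π)

open Classical in
/-- The finite set of all parking functions of length `n`. -/
noncomputable def PFfin (n : ℕ) : Finset (List ℕ) :=
  ((Finset.univ : Finset (Fin n → Fin n)).image
    (fun f => List.ofFn (fun i => (f i : ℕ) + 1))).filter IsPF

/-- Split a word into consecutive factors of the given lengths. -/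
def splitFactors : List ℕ → List ℕ → List (List ℕ)
  | [], _ => []
  | k :: ks, e => e.take k :: splitFactors ks (e.drop k)

/-- Iterated shifted concatenation. -/
def sconcAll : List (List ℕ) → List ℕ
  | [] => []
  | u :: rest => sconc u (sconcAll rest)

/-- Multiset of tuples `(a₁, …, a_r)` (as lists) with `aᵢ↑ = πᵢ`. -/
def tuplesM : List (List ℕ) → Multiset (List (List ℕ))
  | [] => {[]}
  | p :: ps => (classM p).bind (fun a => (tuplesM ps).map (fun A => a :: A))

/-- `π'` is a successor of `π`: the evaluation of `π'` is obtained from that of `π`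
by merging two consecutive (modulo zeros) nonzero entries onto the left one. -/
def IsSuccEv (π π' : List ℕ) : Prop :=
  ∃ i j : ℕ, 1 ≤ i ∧ i < j ∧ π.count i ≠ 0 ∧ π.count j ≠ 0 ∧
    (∀ k, i < k → k < j → π.count k = 0) ∧
    (∀ m, π'.count m = if m = i then π.count i + π.count j else if m = j then 0 else π.count m)

/-- The partial order `π ⪯ π'`: reflexive–transitive closure of the successor relation. -/
def succeq (π π' : List ℕ) : Prop := Relation.ReflTransGen IsSuccEv π π'

/-!
Parkization only looks at how many letters lie below each value, so it commutes with any
rearrangement of positions; hence so does the internal product, when the same rearrangement is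
applied to both factors. Two words with the same sorting differ by such a rearrangement `τ`, and
`(a, b) ↦ (a ∘ τ, b ∘ τ)` preserves `a↑`, `b↑` and being a parking function, so it is a bijection
between the two sets of pairs being counted.
-/

section Permute

variable {α β γ : Type*} [Inhabited α] [Inhabited β] [Inhabited γ] {n : ℕ}

/-- Meant for words of length `n`; `getI` pads shorter words with `default`. -/
def permuteW (τ : Equiv.Perm (Fin n)) (w : List α) : List α :=
  List.ofFn fun i => w.getI (τ i)

@[simp] lemma length_permuteW (τ : Equiv.Perm (Fin n)) (w : List α) :
    (permuteW τ w).length = n :=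
  List.length_ofFn

lemma getElem_permuteW (τ : Equiv.Perm (Fin n)) (w : List α) (i : ℕ)
    (hi : i < (permuteW τ w).length) :
    (permuteW τ w)[i] = w.getI (τ ⟨i, by simpa using hi⟩) :=
  List.getElem_ofFn ..

lemma ofFn_getI {w : List α} (hw : w.length = n) : List.ofFn (fun i : Fin n => w.getI i) = w :=
  List.ext_getElem (by simp [hw]) fun i _ hi => by
    rw [List.getElem_ofFn, List.getI_eq_getElem _ hi]

lemma permuteW_perm (τ : Equiv.Perm (Fin n)) {w : List α} (hw : w.length = n) :
    permuteW τ w ~ w :=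
  (τ.ofFn_comp_perm fun i : Fin n => w.getI i).trans (by rw [ofFn_getI hw])

lemma permuteW_permuteW (σ τ : Equiv.Perm (Fin n)) (w : List α) :
    permuteW σ (permuteW τ w) = permuteW (σ.trans τ) w :=
  List.ext_getElem (by simp) fun i _ _ => by
    rw [getElem_permuteW, getElem_permuteW, List.getI_eq_getElem _ (by simp), getElem_permuteW]
    rfl

lemma permuteW_refl {w : List α} (hw : w.length = n) : permuteW (Equiv.refl (Fin n)) w = w :=
  ofFn_getI hw

lemma permuteW_symm_permuteW (τ : Equiv.Perm (Fin n)) {w : List α} (hw : w.length = n) :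
    permuteW τ.symm (permuteW τ w) = w := by
  rw [permuteW_permuteW, Equiv.symm_trans_self, permuteW_refl hw]

lemma permuteW_permuteW_symm (τ : Equiv.Perm (Fin n)) {w : List α} (hw : w.length = n) :
    permuteW τ (permuteW τ.symm w) = w := by
  rw [permuteW_permuteW, Equiv.self_trans_symm, permuteW_refl hw]

lemma permuteW_map (f : α → β) (τ : Equiv.Perm (Fin n)) {w : List α} (hw : w.length = n) :
    permuteW τ (w.map f) = (permuteW τ w).map f :=
  List.ext_getElem (by simp) fun i hi _ => by
    have hτ : (τ ⟨i, by simpa using hi⟩ : ℕ) < w.length := by rw [hw]; exact Fin.is_lt _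
    rw [getElem_permuteW, List.getElem_map, getElem_permuteW,
      List.getI_eq_getElem _ (by simpa using hτ), List.getElem_map, List.getI_eq_getElem _ hτ]

lemma permuteW_zipWith (f : α → β → γ) (τ : Equiv.Perm (Fin n)) {a : List α} {b : List β}
    (ha : a.length = n) (hb : b.length = n) :
    permuteW τ (List.zipWith f a b) = List.zipWith f (permuteW τ a) (permuteW τ b) :=
  List.ext_getElem (by simp) fun i hi _ => by
    have hτ : (τ ⟨i, by simpa using hi⟩ : ℕ) < n := (τ _).isLt
    rw [getElem_permuteW, List.getElem_zipWith, getElem_permuteW, getElem_permuteW,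
      List.getI_eq_getElem _ (by simp [ha, hb, hτ]), List.getElem_zipWith,
      List.getI_eq_getElem _ (by simp [ha, hτ]), List.getI_eq_getElem _ (by simp [hb, hτ])]

lemma exists_permuteW_eq [LinearOrder α] {c c' : List α} (hc : c.length = n) (h : c ~ c') :
    ∃ τ : Equiv.Perm (Fin n), permuteW τ c = c' := by
  have hc' : c'.length = n := h.length_eq ▸ hc
  set f : Fin n → α := fun i => c.getI i
  set f' : Fin n → α := fun i => c'.getI i
  have hsorted : f ∘ Tuple.sort f = f' ∘ Tuple.sort f' := by
    refine List.ofFn_injective <| List.Perm.eq_of_pairwise' (r := (· ≤ ·)) ?_ ?_ ?_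
    · exact (Tuple.monotone_sort f).sortedLE_ofFn.pairwise
    · exact (Tuple.monotone_sort f').sortedLE_ofFn.pairwise
    · calc List.ofFn (f ∘ Tuple.sort f) ~ c := by
            simpa only [f, ofFn_getI hc] using (Tuple.sort f).ofFn_comp_perm f
        _ ~ c' := h
        _ ~ List.ofFn (f' ∘ Tuple.sort f') := by
            simpa only [f', ofFn_getI hc'] using ((Tuple.sort f').ofFn_comp_perm f').symm
  refine ⟨(Tuple.sort f').symm.trans (Tuple.sort f), ?_⟩
  calc permuteW _ c = List.ofFn ((f ∘ Tuple.sort f) ∘ (Tuple.sort f').symm) := rfl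
    _ = c' := by rw [hsorted, Function.comp_assoc, Equiv.self_comp_symm, Function.comp_id,
      ofFn_getI hc']

end Permute

lemma pairwise_sortW (w : List ℕ) : (sortW w).Pairwise (· ≤ ·) :=
  List.pairwise_mergeSort' _ w

lemma sortW_perm (w : List ℕ) : sortW w ~ w :=
  List.mergeSort_perm w _

lemma length_sortW (w : List ℕ) : (sortW w).length = w.length :=
  (sortW_perm w).length_eq

lemma sortW_eq_of_perm {w w' : List ℕ} (h : w ~ w') : sortW w = sortW w' :=
  ((sortW_perm w).trans (h.trans (sortW_perm w').symm)).eq_of_pairwise'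
    (pairwise_sortW w) (pairwise_sortW w')

lemma perm_of_sortW_eq {w w' : List ℕ} (h : sortW w = sortW w') : w ~ w' :=
  (sortW_perm w).symm.trans (h ▸ sortW_perm w')

lemma IsPF.of_perm {w w' : List ℕ} (h : w ~ w') (hw : IsPF w) : IsPF w' := by
  obtain ⟨hpos, hpark⟩ := hw
  refine ⟨fun x hx => hpos x (h.mem_iff.2 hx), ?_⟩
  rwa [← sortW_eq_of_perm h, ← h.length_eq]

lemma dW_eq_of_perm {w w' : List ℕ} (h : w ~ w') : dW w = dW w' := by
  simp only [dW, h.countP_eq]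

lemma park_of_dW_eq {w : List ℕ} (h : dW w = w.length + 1) : park w = w := by
  rw [park, dif_pos h]

lemma park_of_dW_ne {w : List ℕ} (h : dW w ≠ w.length + 1) :
    park w = park (decAbove (dW w) w) := by
  rw [park, dif_neg h]

lemma park_permuteW {n : ℕ} (τ : Equiv.Perm (Fin n)) {w : List ℕ} (hw : w.length = n) :
    park (permuteW τ w) = permuteW τ (park w) := by
  induction w using park.induct with
  | case1 w hd =>
    have hdW := dW_eq_of_perm (permuteW_perm τ hw)
    rw [park_of_dW_eq hd, park_of_dW_eq (by rw [hdW, hd, length_permuteW, hw])]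
  | case2 w hd _ ih =>
    have hdW := dW_eq_of_perm (permuteW_perm τ hw)
    rw [park_of_dW_ne hd, park_of_dW_ne (by rwa [hdW, length_permuteW, ← hw]), hdW, decAbove,
      ← permuteW_map _ τ hw]
    exact ih (by simp [decAbove, hw])

lemma iprod_permuteW {n : ℕ} (τ : Equiv.Perm (Fin n)) {a b : List ℕ} (ha : a.length = n)
    (hb : b.length = n) : iprod (permuteW τ a) (permuteW τ b) = permuteW τ (iprod a b) := by
  rw [iprod, iprod, length_permuteW, ha, pairEnc, pairEnc, ← permuteW_zipWith _ τ ha hb,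
    park_permuteW τ (by simp [ha, hb])]

def iprodFiber (π ρ c : List ℕ) : Set (List ℕ × List ℕ) :=
  {p | IsPF p.1 ∧ IsPF p.2 ∧ sortW p.1 = π ∧ sortW p.2 = ρ ∧ iprod p.1 p.2 = c}

lemma length_of_mem_iprodFiber {π ρ c : List ℕ} {p : List ℕ × List ℕ}
    (hp : p ∈ iprodFiber π ρ c) : p.1.length = π.length ∧ p.2.length = ρ.length := by
  obtain ⟨-, -, rfl, rfl, -⟩ := hp
  exact ⟨(length_sortW _).symm, (length_sortW _).symm⟩

lemma mapsTo_iprodFiber_permuteW {n : ℕ} {π ρ : List ℕ} (hπ : π.length = n) (hρ : ρ.length = n)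
    (τ : Equiv.Perm (Fin n)) (c : List ℕ) :
    Set.MapsTo (Prod.map (permuteW τ) (permuteW τ)) (iprodFiber π ρ c)
      (iprodFiber π ρ (permuteW τ c)) := by
  rintro ⟨a, b⟩ ⟨ha, hb, rfl, rfl, rfl⟩
  rw [length_sortW] at hπ hρ
  have hτa := permuteW_perm τ hπ
  have hτb := permuteW_perm τ hρ
  exact ⟨ha.of_perm hτa.symm, hb.of_perm hτb.symm, sortW_eq_of_perm hτa, sortW_eq_of_perm hτb,
    iprod_permuteW τ hπ hρ⟩

lemma ncard_iprodFiber_permuteW {n : ℕ} {π ρ c : List ℕ} (hπ : π.length = n)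
    (hρ : ρ.length = n) (hc : c.length = n) (τ : Equiv.Perm (Fin n)) :
    (iprodFiber π ρ (permuteW τ c)).ncard = (iprodFiber π ρ c).ncard := by
  have hback := mapsTo_iprodFiber_permuteW hπ hρ τ.symm (permuteW τ c)
  rw [permuteW_symm_permuteW τ hc] at hback
  have hinv : Set.InvOn (Prod.map (permuteW τ.symm) (permuteW τ.symm))
      (Prod.map (permuteW τ) (permuteW τ)) (iprodFiber π ρ c)
      (iprodFiber π ρ (permuteW τ c)) := by
    constructor
    · intro p hp
      obtain ⟨h₁, h₂⟩ := length_of_mem_iprodFiber hp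
      exact Prod.ext (permuteW_symm_permuteW τ (h₁.trans hπ))
        (permuteW_symm_permuteW τ (h₂.trans hρ))
    · intro p hp
      obtain ⟨h₁, h₂⟩ := length_of_mem_iprodFiber hp
      exact Prod.ext (permuteW_permuteW_symm τ (h₁.trans hπ))
        (permuteW_permuteW_symm τ (h₂.trans hρ))
  exact (hinv.bijOn (mapsTo_iprodFiber_permuteW hπ hρ τ c) hback).ncard_eq.symm

theorem catalan_stable_internal_general (n : ℕ) (pi rho c c' : List ℕ)
    (hpil : pi.length = n) (hrhol : rho.length = n) (hcl : c.length = n)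
    (hcc : sortW c = sortW c') :
    {p : List ℕ × List ℕ | IsPF p.1 ∧ IsPF p.2 ∧ sortW p.1 = pi ∧ sortW p.2 = rho ∧
        iprod p.1 p.2 = c}.ncard =
    {p : List ℕ × List ℕ | IsPF p.1 ∧ IsPF p.2 ∧ sortW p.1 = pi ∧ sortW p.2 = rho ∧
        iprod p.1 p.2 = c'}.ncard := by
  obtain ⟨τ, rfl⟩ := exists_permuteW_eq hcl (perm_of_sortW_eq hcc)
  exact (ncard_iprodFiber_permuteW hpil hrhol hcl τ).symm

/-- For nondecreasing parking functions `π, ρ` of length `n` and parking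
functions `c, c'` of length `n` with `c↑ = c'↑`, the number of pairs `(a, b)` of parking
functions with `a↑ = π`, `b↑ = ρ` and `a * b = c` equals the corresponding number for `c'`
(CQSym_n is stable under the internal product). -/
theorem catalan_stable_internal (n : ℕ) (pi rho c c' : List ℕ)
    (hpi : IsPF pi) (hpis : pi.Pairwise (· ≤ ·)) (hpil : pi.length = n)
    (hrho : IsPF rho) (hrhos : rho.Pairwise (· ≤ ·)) (hrhol : rho.length = n)
    (hc : IsPF c) (hcl : c.length = n) (hc' : IsPF c') (hc'l : c'.length = n)
    (hcc : sortW c = sortW c') :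
    {p : List ℕ × List ℕ | IsPF p.1 ∧ IsPF p.2 ∧ sortW p.1 = pi ∧ sortW p.2 = rho ∧
        iprod p.1 p.2 = c}.ncard =
    {p : List ℕ × List ℕ | IsPF p.1 ∧ IsPF p.2 ∧ sortW p.1 = pi ∧ sortW p.2 = rho ∧
        iprod p.1 p.2 = c'}.ncard :=
  catalan_stable_internal_general n pi rho c c' hpil hrhol hcl hcc
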